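/- arXiv:2306.07059 — 5 statements merged into one kernel-verified Lean document; each statement's English description precedes it below -/
import Mathlib

section
/- Let $T$ be a monotone functional on CDFs on $[a,b]$, i.e., $F(x) \ge G(x)$ for all $x$ implies $T(F) \le T(G)$ (stochastic dominance monotonicity). Then for any CDF $F$ on $[a,b]$ and $c \in (0,1)$, the CDF $\bar F(x) = \max\{F(x) - c\cdot\mathbb{1}[x<b], 0\}$ maximizes $T$ over the ball $\{G \text{ CDF on } [a,b] : \|G - F\|_\infty \le c\}$, and $\underline F(x) = \min\{F(x) + c\cdot\mathbb{1}[x \ge a], 1\}$ minimizes $T$ over that ball. -/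
def IsCDFOn (a b : ℝ) (F : ℝ → ℝ) : Prop :=
  Monotone F ∧ (∀ x, x < a → F x = 0) ∧ (∀ x, b ≤ x → F x = 1)

lemma cdf_nonneg {a b : ℝ} {F : ℝ → ℝ} (hF : IsCDFOn a b F) : ∀ x, 0 ≤ F x := by
  intro x
  rcases lt_or_ge x a with h | h
  · rw [hF.2.1 x h]
  · have h0 : F (a - 1) = 0 := hF.2.1 _ (by linarith)
    have := hF.1 (show a - 1 ≤ x by linarith)
    linarith

lemma cdf_le_one {a b : ℝ} {F : ℝ → ℝ} (hF : IsCDFOn a b F) : ∀ x, F x ≤ 1 := by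
  intro x
  rcases le_or_gt b x with h | h
  · rw [hF.2.2 x h]
  · have h1 : F b = 1 := hF.2.2 b le_rfl
    have := hF.1 h.le
    linarith

theorem stmt_2 (a b c : ℝ) (hab : a < b) (hc : 0 < c) (hc1 : c < 1)
    (T : (ℝ → ℝ) → ℝ)
    (hT : ∀ F G : ℝ → ℝ, IsCDFOn a b F → IsCDFOn a b G →
      (∀ x, G x ≤ F x) → T F ≤ T G)
    (F : ℝ → ℝ) (hF : IsCDFOn a b F) :
    (IsCDFOn a b (fun x => max (F x - c * (if x < b then 1 else 0)) 0) ∧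
      (∀ x, |max (F x - c * (if x < b then 1 else 0)) 0 - F x| ≤ c) ∧
      (∀ G, IsCDFOn a b G → (∀ x, |G x - F x| ≤ c) →
        T G ≤ T (fun x => max (F x - c * (if x < b then 1 else 0)) 0))) ∧
    (IsCDFOn a b (fun x => min (F x + c * (if a ≤ x then 1 else 0)) 1) ∧
      (∀ x, |min (F x + c * (if a ≤ x then 1 else 0)) 1 - F x| ≤ c) ∧
      (∀ G, IsCDFOn a b G → (∀ x, |G x - F x| ≤ c) →
        T (fun x => min (F x + c * (if a ≤ x then 1 else 0)) 1) ≤ T G)) := by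
  have hFnn := cdf_nonneg hF
  have hFle := cdf_le_one hF
  have hFbar : IsCDFOn a b (fun x => max (F x - c * (if x < b then 1 else 0)) 0) := by
    refine ⟨?_, ?_, ?_⟩
    · intro x y hxy
      simp only
      have hm := hF.1 hxy
      split_ifs with h1 h2 h2
      · exact max_le_max (by linarith) le_rfl
      · have hy1 : F y = 1 := hF.2.2 y (not_lt.mp h2)
        exact max_le (le_max_of_le_left (by linarith)) (le_max_right _ _)
      · exact absurd (lt_of_le_of_lt hxy h2) h1
      · exact max_le_max (by linarith) le_rfl
    · intro x hx
      simp only [hF.2.1 x hx, if_pos (hx.trans hab)]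
      simp; linarith
    · intro x hx
      simp only [hF.2.2 x hx, if_neg (not_lt.mpr hx)]
      simp
  have hFund : IsCDFOn a b (fun x => min (F x + c * (if a ≤ x then 1 else 0)) 1) := by
    refine ⟨?_, ?_, ?_⟩
    · intro x y hxy
      simp only
      have hm := hF.1 hxy
      split_ifs with h1 h2 h2
      · exact min_le_min (by linarith) le_rfl
      · exact absurd (h1.trans hxy) h2
      · exact min_le_min (by linarith) le_rfl
      · exact min_le_min (by linarith) le_rfl
    · intro x hx
      simp only [hF.2.1 x hx, if_neg (not_le.mpr hx)]
      rw [mul_zero, add_zero, min_eq_left (by linarith)]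
    · intro x hx
      simp only [hF.2.2 x hx, if_pos (hab.le.trans hx)]
      rw [mul_one, min_eq_right (by linarith)]
  refine ⟨⟨hFbar, ?_, ?_⟩, hFund, ?_, ?_⟩
  · intro x
    split_ifs with h
    · rw [abs_le]
      constructor
      · have := hFnn x
        rcases le_total (F x - c * 1) 0 with h' | h'
        · rw [max_eq_right h']; linarith
        · rw [max_eq_left h']; linarith
      · have : max (F x - c * 1) 0 ≤ F x := max_le (by linarith) (hFnn x)
        linarith
    · simp only [mul_zero, sub_zero, max_eq_left (hFnn x), sub_self, abs_zero]
      exact hc.le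
  · intro G hG hGc
    refine hT G _ hG hFbar ?_
    intro x
    rcases lt_or_ge x b with h | h
    · rw [if_pos h]
      have h1 := (abs_le.mp (hGc x)).1
      exact max_le (by linarith) (cdf_nonneg hG x)
    · rw [if_neg (not_lt.mpr h), hG.2.2 x h]
      have := hFle x
      exact max_le (by linarith) (by linarith)
  · intro x
    split_ifs with h
    · rw [abs_le]
      constructor
      · have : F x ≤ min (F x + c * 1) 1 := le_min (by linarith) (hFle x)
        linarith
      · have := hFnn x
        rcases le_total (F x + c * 1) 1 with h' | h'
        · rw [min_eq_left h']; linarith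
        · rw [min_eq_right h']; linarith
    · simp only [mul_zero, add_zero, min_eq_left (hFle x), sub_self, abs_zero]
      exact hc.le
  · intro G hG hGc
    refine hT _ G hFund hG ?_
    intro x
    rcases le_or_gt a x with h | h
    · rw [if_pos h]
      have h1 := (abs_le.mp (hGc x)).2
      exact le_min (by linarith) (cdf_le_one hG x)
    · rw [if_neg (not_le.mpr h), hG.2.1 x h, hF.2.1 x h]
      exact le_min (by linarith) (by linarith)
end

section
/- Let $F, G$ be CDFs on $[a,b]$ and $\beta > 0$. Then $\left|\frac{1}{\beta}\log\int_a^b e^{\beta x}dF(x) - \frac{1}{\beta}\log\int_a^b e^{\beta x}dG(x)\right| \le \frac{e^{\beta(b-a)} - 1}{\beta}\,\|F - G\|_\infty$, i.e., the entropic risk measure is globally Lipschitz in the supremum distance with constant $(e^{\beta(b-a)}-1)/\beta$. -/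
/-!
Layer cake: if `m ≤ f ≤ M` then `∫ f dμ = m + ∫_m^M μ{f > t} dt`. The superlevel sets of
`x ↦ exp (β x)` are half-lines `(s, ∞)`, whose measures are `1 - F s`, so the exponential moments
of `μ` and `ν` differ by at most `(exp (β b) - exp (β a)) ‖F - G‖∞`. Both moments are at least
`exp (β a)`, where `log` is `exp (-β a)`-Lipschitz.
-/

open MeasureTheory Set Real

section LayerCake

variable {α : Type*} [MeasurableSpace α] {μ : Measure α} {f : α → ℝ} {m M : ℝ}

lemma integrableOn_Ioc_measureReal_lt [IsFiniteMeasure μ] :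
    IntegrableOn (fun t => μ.real {x | t < f x}) (Ioc m M) := by
  have anti : Antitone fun t => μ.real {x | t < f x} :=
    fun _ _ hst => measureReal_mono fun _ hx => hst.trans_lt hx
  exact (anti.locallyIntegrable.integrableOn_isCompact isCompact_Icc).mono_set Ioc_subset_Icc_self

variable [IsProbabilityMeasure μ]

lemma integral_eq_add_integral_Ioc_measureReal_lt (hf : Measurable f)
    (hfmM : ∀ᵐ x ∂μ, f x ∈ Icc m M) :
    ∫ x, f x ∂μ = m + ∫ t in Ioc m M, μ.real {x | t < f x} := by
  have hmM : m ≤ M := by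
    obtain ⟨x, hx⟩ := hfmM.exists
    exact hx.1.trans hx.2
  have hf_int : Integrable f μ :=
    .of_bound hf.aestronglyMeasurable (max |m| |M|)
      (hfmM.mono fun x hx => abs_le_max_abs_abs hx.1 hx.2)
  have layer_cake := (hf_int.sub (integrable_const m)).integral_eq_integral_Ioc_meas_le
    (f := fun x => f x - m) (M := M - m) (hfmM.mono fun x hx => sub_nonneg.2 hx.1)
    (hfmM.mono fun x hx => sub_le_sub_right hx.2 m)
  rw [integral_sub hf_int (integrable_const m), integral_const, probReal_univ, one_smul,
    sub_eq_iff_eq_add'] at layer_cake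
  have le_ae_lt : (fun t => μ.real {x | t ≤ f x - m}) =ᵐ[volume.restrict (Ioc 0 (M - m))]
      fun t => μ.real {x | t + m < f x} := by
    filter_upwards [meas_le_ae_eq_meas_lt μ (volume.restrict (Ioc 0 (M - m)))
      (fun x => f x - m)] with t ht
    simp only [measureReal_def, ht, lt_sub_iff_add_lt]
  rw [layer_cake, integral_congr_ae le_ae_lt, ← intervalIntegral.integral_of_le (by linarith),
    intervalIntegral.integral_comp_add_right (fun t => μ.real {x | t < f x}), zero_add,
    sub_add_cancel, intervalIntegral.integral_of_le hmM]

lemma le_integral_of_ae_mem_Icc (hf : Measurable f) (hfmM : ∀ᵐ x ∂μ, f x ∈ Icc m M) :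
    m ≤ ∫ x, f x ∂μ := by
  rw [integral_eq_add_integral_Ioc_measureReal_lt hf hfmM]
  exact le_add_of_nonneg_right (setIntegral_nonneg measurableSet_Ioc fun _ _ => measureReal_nonneg)

lemma abs_integral_sub_integral_le_of_abs_measureReal_lt_sub_le {ν : Measure α}
    [IsProbabilityMeasure ν] {D : ℝ} (hf : Measurable f)
    (hμ : ∀ᵐ x ∂μ, f x ∈ Icc m M) (hν : ∀ᵐ x ∂ν, f x ∈ Icc m M)
    (hD : ∀ t ∈ Ioc m M, |μ.real {x | t < f x} - ν.real {x | t < f x}| ≤ D) :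
    |∫ x, f x ∂μ - ∫ x, f x ∂ν| ≤ (M - m) * D := by
  have hmM : m ≤ M := by
    obtain ⟨x, hx⟩ := hμ.exists
    exact hx.1.trans hx.2
  rw [integral_eq_add_integral_Ioc_measureReal_lt hf hμ,
    integral_eq_add_integral_Ioc_measureReal_lt hf hν, add_sub_add_left_eq_sub,
    ← integral_sub integrableOn_Ioc_measureReal_lt integrableOn_Ioc_measureReal_lt,
    ← Real.norm_eq_abs, mul_comm, ← Real.volume_real_Ioc_of_le hmM]
  exact norm_setIntegral_le_of_norm_le_const_ae' measure_Ioc_lt_top (ae_of_all _ hD)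

end LayerCake

lemma abs_log_sub_log_le_abs_sub_div {c x y : ℝ} (hc : 0 < c) (hx : c ≤ x) (hy : c ≤ y) :
    |log x - log y| ≤ |x - y| / c := by
  wlog hyx : y ≤ x generalizing x y
  · rw [abs_sub_comm, abs_sub_comm x]
    exact this hy hx (le_of_not_ge hyx)
  have hy0 : 0 < y := hc.trans_le hy
  have hx0 : 0 < x := hy0.trans_le hyx
  rw [abs_of_nonneg (sub_nonneg.2 (log_le_log hy0 hyx)), abs_of_nonneg (sub_nonneg.2 hyx),
    ← log_div hx0.ne' hy0.ne']
  calc log (x / y) ≤ x / y - 1 := log_le_sub_one_of_pos (by positivity)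
    _ = (x - y) / y := by field_simp
    _ ≤ (x - y) / c := by gcongr

lemma abs_measureReal_Ioi_sub_le_iSup (μ ν : Measure ℝ) [IsProbabilityMeasure μ]
    [IsProbabilityMeasure ν] (s : ℝ) :
    |μ.real (Ioi s) - ν.real (Ioi s)| ≤ ⨆ x : ℝ, |(μ (Iic x)).toReal - (ν (Iic x)).toReal| := by
  have hbdd : BddAbove (range fun x : ℝ => |(μ (Iic x)).toReal - (ν (Iic x)).toReal|) :=
    ⟨1, forall_mem_range.2 fun x => abs_sub_le_of_nonneg_of_le measureReal_nonneg
      measureReal_le_one measureReal_nonneg measureReal_le_one⟩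
  rw [← compl_Iic, probReal_compl_eq_one_sub measurableSet_Iic,
    probReal_compl_eq_one_sub measurableSet_Iic, sub_sub_sub_cancel_left, abs_sub_comm]
  exact le_ciSup hbdd s

lemma setOf_lt_exp_mul {β t : ℝ} (hβ : 0 < β) (ht : 0 < t) :
    {x : ℝ | t < exp (β * x)} = Ioi (log t / β) := by
  ext x
  rw [mem_Ioi, div_lt_iff₀ hβ, mul_comm, log_lt_iff_lt_exp ht]
  rfl

lemma ae_exp_mul_mem_Icc {μ : Measure ℝ} [IsProbabilityMeasure μ] {a b β : ℝ} (hβ : 0 ≤ β)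
    (hμ : μ (Icc a b) = 1) : ∀ᵐ x ∂μ, exp (β * x) ∈ Icc (exp (β * a)) (exp (β * b)) := by
  filter_upwards [(mem_ae_iff_prob_eq_one measurableSet_Icc).2 hμ] with x hx
  exact ⟨exp_le_exp.2 (mul_le_mul_of_nonneg_left hx.1 hβ),
    exp_le_exp.2 (mul_le_mul_of_nonneg_left hx.2 hβ)⟩

theorem stmt_9_general (a b β : ℝ) (hβ : 0 < β)
    (μ ν : Measure ℝ) [IsProbabilityMeasure μ] [IsProbabilityMeasure ν]
    (hμ : μ (Set.Icc a b) = 1) (hν : ν (Set.Icc a b) = 1) :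
    |(1 / β) * Real.log (∫ x, Real.exp (β * x) ∂μ) -
        (1 / β) * Real.log (∫ x, Real.exp (β * x) ∂ν)| ≤
      ((Real.exp (β * (b - a)) - 1) / β) *
        ⨆ x : ℝ, |(μ (Set.Iic x)).toReal - (ν (Set.Iic x)).toReal| := by
  set D := ⨆ x : ℝ, |(μ (Iic x)).toReal - (ν (Iic x)).toReal|
  have hexp : Measurable fun x => exp (β * x) := by fun_prop
  have hμ' := ae_exp_mul_mem_Icc hβ.le hμ
  have hν' := ae_exp_mul_mem_Icc hβ.le hν
  have hdiff := abs_integral_sub_integral_le_of_abs_measureReal_lt_sub_le hexp hμ' hν'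
    (D := D) fun t ht => by
      rw [setOf_lt_exp_mul hβ ((exp_pos _).trans ht.1)]
      exact abs_measureReal_Ioi_sub_le_iSup μ ν _
  have hlog := abs_log_sub_log_le_abs_sub_div (exp_pos (β * a))
    (le_integral_of_ae_mem_Icc hexp hμ') (le_integral_of_ae_mem_Icc hexp hν')
  calc |1 / β * log (∫ x, exp (β * x) ∂μ) - 1 / β * log (∫ x, exp (β * x) ∂ν)|
      = 1 / β * |log (∫ x, exp (β * x) ∂μ) - log (∫ x, exp (β * x) ∂ν)| := by
        rw [← mul_sub, abs_mul, abs_of_pos (by positivity)]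
    _ ≤ 1 / β * ((exp (β * b) - exp (β * a)) * D / exp (β * a)) := by
        gcongr
        exact hlog.trans (by gcongr)
    _ = (exp (β * (b - a)) - 1) / β * D := by
        rw [mul_sub, exp_sub]
        field_simp

theorem stmt_9 (a b β : ℝ) (hab : a < b) (hβ : 0 < β)
    (μ ν : Measure ℝ) [IsProbabilityMeasure μ] [IsProbabilityMeasure ν]
    (hμ : μ (Set.Icc a b) = 1) (hν : ν (Set.Icc a b) = 1) :
    |(1 / β) * Real.log (∫ x, Real.exp (β * x) ∂μ) -
        (1 / β) * Real.log (∫ x, Real.exp (β * x) ∂ν)| ≤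
      ((Real.exp (β * (b - a)) - 1) / β) *
        ⨆ x : ℝ, |(μ (Set.Iic x)).toReal - (ν (Set.Iic x)).toReal| :=
  stmt_9_general a b β hβ μ ν hμ hν
end

section
/- Let $F, G$ be CDFs on $[a,b]$ and $\beta > 0$. Then $\left|\frac{1}{\beta}\log\int e^{\beta x}dF(x) - \frac{1}{\beta}\log\int e^{\beta x}dG(x)\right| \le e^{\beta(b-a)}\, W_1(F,G)$, where $W_1(F,G) = \int_a^b |F(x)-G(x)|dx$ is the Wasserstein-1 distance. -/
/-!
Writing `f y = f b - ∫_a^b 1[y ≤ x] f' x dx` and swapping the integrals (Fubini) gives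
`∫ f dμ = f b - ∫_a^b f' x F(x) dx` for `μ` supported on `[a, b]` with CDF `F`. Hence
`|∫ f dμ - ∫ f dν| ≤ sup_{[a,b]} |f'| · W₁(μ, ν)`; for `f = exp (β ·)` this is `β e^{βb} W₁`.
Both exponential moments are at least `e^{βa}`, where `log` is `e^{-βa}`-Lipschitz.
-/

open MeasureTheory Set

section SupportedOnIcc

variable {μ : Measure ℝ} {a b : ℝ}

theorem integral_eq_sub_intervalIntegral_deriv_mul_measureReal_Iic [IsFiniteMeasure μ]
    (hab : a ≤ b) (hμ : ∀ᵐ y ∂μ, y ∈ Icc a b) {f f' : ℝ → ℝ}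
    (hf : ∀ x, HasDerivAt f (f' x) x) (hf' : Continuous f') :
    ∫ y, f y ∂μ = μ.real univ * f b - ∫ x in a..b, f' x * μ.real (Iic x) := by
  set g : ℝ → ℝ → ℝ := fun y x => (Ici y).indicator f' x with hg
  have hg_eq : Function.uncurry g = {p : ℝ × ℝ | p.1 ≤ p.2}.indicator (fun p => f' p.2) := by
    ext p; rfl
  obtain ⟨C, hC⟩ := (isCompact_Icc (a := a) (b := b)).exists_bound_of_continuousOn hf'.continuousOn
  have hg_int : Integrable (Function.uncurry g) (μ.prod (volume.restrict (Icc a b))) := by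
    refine Integrable.mono' (integrable_const C) ?_ ?_
    · rw [hg_eq]
      exact ((hf'.comp continuous_snd).measurable.indicator
        (measurableSet_le measurable_fst measurable_snd)).aestronglyMeasurable
    · filter_upwards [Measure.quasiMeasurePreserving_snd.ae (ae_restrict_mem measurableSet_Icc)]
        with p hp
      rw [hg_eq]
      exact (norm_indicator_le_norm_self _ _).trans (hC _ hp)
  have h_inner : ∀ y ∈ Icc a b, ∫ x in Icc a b, g y x = f b - f y := by
    intro y hy
    rw [setIntegral_indicator measurableSet_Ici, ← Ici_inter_Iic, inter_right_comm, Ici_inter_Ici,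
      max_eq_right hy.1, Ici_inter_Iic, integral_Icc_eq_integral_Ioc,
      ← intervalIntegral.integral_of_le hy.2]
    exact intervalIntegral.integral_eq_sub_of_hasDerivAt (fun x _ => hf x)
      (hf'.intervalIntegrable _ _)
  have h_outer : ∀ x, ∫ y, g y x ∂μ = μ.real (Iic x) * f' x := by
    intro x
    have : (fun y => g y x) = (Iic x).indicator fun _ => f' x := by
      ext y; simp [hg, indicator]
    rw [this, integral_indicator_const _ measurableSet_Iic, smul_eq_mul]
  calc ∫ y, f y ∂μ = ∫ y, (f b - ∫ x in Icc a b, g y x) ∂μ := by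
        refine integral_congr_ae ?_
        filter_upwards [hμ] with y hy
        rw [h_inner y hy, sub_sub_cancel]
    _ = μ.real univ * f b - ∫ x in Icc a b, ∫ y, g y x ∂μ := by
        have h_int : Integrable (fun y => ∫ x in Icc a b, g y x) μ := hg_int.integral_prod_left
        rw [integral_sub (integrable_const _) h_int, integral_const,
          smul_eq_mul, integral_integral_swap hg_int]
    _ = μ.real univ * f b - ∫ x in a..b, f' x * μ.real (Iic x) := by
        simp_rw [h_outer, mul_comm (μ.real _)]
        rw [intervalIntegral.integral_of_le hab, integral_Icc_eq_integral_Ioc]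

theorem intervalIntegrable_measureReal_Iic (ρ : Measure ℝ) [IsFiniteMeasure ρ] (a b : ℝ) :
    IntervalIntegrable (fun x => ρ.real (Iic x)) volume a b :=
  Monotone.intervalIntegrable fun _ _ h => measureReal_mono (Iic_subset_Iic.2 h)

theorem abs_integral_sub_integral_le_mul_intervalIntegral_abs_sub [IsProbabilityMeasure μ]
    {ν : Measure ℝ} [IsProbabilityMeasure ν] (hab : a ≤ b) (hμ : ∀ᵐ y ∂μ, y ∈ Icc a b)
    (hν : ∀ᵐ y ∂ν, y ∈ Icc a b) {f f' : ℝ → ℝ} (hf : ∀ x, HasDerivAt f (f' x) x)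
    (hf' : Continuous f') {C : ℝ} (hC : ∀ x ∈ Icc a b, |f' x| ≤ C) :
    |∫ y, f y ∂μ - ∫ y, f y ∂ν| ≤ C * ∫ x in a..b, |μ.real (Iic x) - ν.real (Iic x)| := by
  rw [integral_eq_sub_intervalIntegral_deriv_mul_measureReal_Iic hab hμ hf hf',
    integral_eq_sub_intervalIntegral_deriv_mul_measureReal_Iic hab hν hf hf', probReal_univ,
    probReal_univ, sub_sub_sub_cancel_left, ← intervalIntegral.integral_sub
      ((intervalIntegrable_measureReal_Iic ν a b).continuousOn_mul hf'.continuousOn)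
      ((intervalIntegrable_measureReal_Iic μ a b).continuousOn_mul hf'.continuousOn),
    ← intervalIntegral.integral_const_mul, ← Real.norm_eq_abs]
  refine intervalIntegral.norm_integral_le_of_norm_le hab (ae_of_all _ fun x hx => ?_) ?_
  · rw [← mul_sub, Real.norm_eq_abs, abs_mul, abs_sub_comm]
    exact mul_le_mul_of_nonneg_right (hC x (Ioc_subset_Icc_self hx)) (abs_nonneg _)
  · exact (((intervalIntegrable_measureReal_Iic μ a b).sub
      (intervalIntegrable_measureReal_Iic ν a b)).abs.const_mul C)

theorem integrable_of_ae_mem_Icc [IsFiniteMeasure μ] (hμ : ∀ᵐ y ∂μ, y ∈ Icc a b) {f : ℝ → ℝ}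
    (hf : ContinuousOn f (Icc a b)) : Integrable f μ := by
  rw [← Measure.restrict_eq_self_of_ae_mem hμ]
  exact hf.integrableOn_Icc

theorem MonotoneOn.le_integral_of_ae_mem_Icc [IsProbabilityMeasure μ]
    (hμ : ∀ᵐ y ∂μ, y ∈ Icc a b) {f : ℝ → ℝ} (hf : ContinuousOn f (Icc a b))
    (hf_mono : MonotoneOn f (Icc a b)) : f a ≤ ∫ y, f y ∂μ := by
  have h_le : ∀ᵐ y ∂μ, f a ≤ f y := by
    filter_upwards [hμ] with y hy
    exact hf_mono (left_mem_Icc.2 (hy.1.trans hy.2)) hy hy.1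
  simpa using integral_mono_ae (integrable_const (f a)) (integrable_of_ae_mem_Icc hμ hf) h_le

end SupportedOnIcc

theorem Real.abs_log_sub_log_le {c x y : ℝ} (hc : 0 < c) (hx : c ≤ x) (hy : c ≤ y) :
    |Real.log x - Real.log y| ≤ |x - y| / c := by
  have h_one_sided (u v : ℝ) (hu : c ≤ u) (hv : c ≤ v) :
      Real.log u - Real.log v ≤ |u - v| / c := by
    have hv0 : 0 < v := hc.trans_le hv
    calc Real.log u - Real.log v = Real.log (u / v) := (Real.log_div (by linarith) hv0.ne').symm
      _ ≤ u / v - 1 := Real.log_le_sub_one_of_pos (div_pos (hc.trans_le hu) hv0)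
      _ = (u - v) / v := by field_simp
      _ ≤ |u - v| / c := div_le_div₀ (abs_nonneg _) (le_abs_self _) hc hv
  refine abs_sub_le_iff.2 ⟨h_one_sided x y hx hy, ?_⟩
  rw [abs_sub_comm]
  exact h_one_sided y x hy hx

theorem stmt_10 (a b β : ℝ) (hab : a < b) (hβ : 0 < β)
    (μ ν : Measure ℝ) [IsProbabilityMeasure μ] [IsProbabilityMeasure ν]
    (hμ : μ (Set.Icc a b) = 1) (hν : ν (Set.Icc a b) = 1) :
    |(1 / β) * Real.log (∫ x, Real.exp (β * x) ∂μ) -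
        (1 / β) * Real.log (∫ x, Real.exp (β * x) ∂ν)| ≤
      Real.exp (β * (b - a)) *
        ∫ x in a..b, |(μ (Set.Iic x)).toReal - (ν (Set.Iic x)).toReal| := by
  have hμ_ae : ∀ᵐ y ∂μ, y ∈ Icc a b := (mem_ae_iff_prob_eq_one measurableSet_Icc).2 hμ
  have hν_ae : ∀ᵐ y ∂ν, y ∈ Icc a b := (mem_ae_iff_prob_eq_one measurableSet_Icc).2 hν
  have h_deriv (x : ℝ) : HasDerivAt (fun y => Real.exp (β * y)) (β * Real.exp (β * x)) x := by
    simpa [mul_comm] using ((hasDerivAt_id x).const_mul β).exp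
  have h_mono : MonotoneOn (fun y => Real.exp (β * y)) (Icc a b) := fun x _ y _ hxy =>
    Real.exp_le_exp.2 (mul_le_mul_of_nonneg_left hxy hβ.le)
  have h_deriv_le : ∀ x ∈ Icc a b, |β * Real.exp (β * x)| ≤ β * Real.exp (β * b) := fun x hx => by
    rw [abs_of_pos (by positivity)]
    exact mul_le_mul_of_nonneg_left (h_mono hx (right_mem_Icc.2 hab.le) hx.2) hβ.le
  have h_cont : Continuous fun y => Real.exp (β * y) := by fun_prop
  have h_diff := abs_integral_sub_integral_le_mul_intervalIntegral_abs_sub hab.le hμ_ae hν_ae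
    h_deriv (by fun_prop) h_deriv_le
  have h_log := Real.abs_log_sub_log_le (Real.exp_pos (β * a))
    (h_mono.le_integral_of_ae_mem_Icc hμ_ae h_cont.continuousOn)
    (h_mono.le_integral_of_ae_mem_Icc hν_ae h_cont.continuousOn)
  rw [← mul_sub, abs_mul, abs_of_pos (one_div_pos.2 hβ)]
  calc 1 / β * |Real.log (∫ x, Real.exp (β * x) ∂μ) - Real.log (∫ x, Real.exp (β * x) ∂ν)|
      ≤ 1 / β * (β * Real.exp (β * b) *
          (∫ x in a..b, |μ.real (Iic x) - ν.real (Iic x)|) / Real.exp (β * a)) := by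
        gcongr
        exact h_log.trans (div_le_div_of_nonneg_right h_diff (Real.exp_pos _).le)
    _ = _ := by
        rw [mul_sub, Real.exp_sub]
        field_simp
        rfl
end

section
/- CVaR is locally Lipschitz in the supremum distance: for CDFs $F, G$ on $[a,b]$ with $\|F - G\|_\infty \le c$ where $\alpha + c < 1$, $|C_\alpha(F) - C_\alpha(G)| \le \frac{b - F^{-1}(1-\alpha-c)}{\alpha}\,\|F - G\|_\infty$, where $C_\alpha(F) = \frac{1}{\alpha}\int_{1-\alpha}^1 F^{-1}(y)\,dy$. -/
/-!
If `F ≤ G + d` pointwise then `G⁻¹ y ≤ F⁻¹ (y + d)`, so shifting the window `[1 - α, 1]` up by `d`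
shows that `∫_{1-α}^1 G⁻¹` exceeds `∫_{1-α}^1 F⁻¹` by at most the mass `d b` gained at the top
minus the mass `d F⁻¹(1 - α)` lost at the bottom. With `d = ‖F - G‖∞` this bounds the difference
in both directions, and `F⁻¹(1 - α)` and `G⁻¹(1 - α)` both dominate `F⁻¹(1 - α - c)` since
`G ≤ F + c`.
-/

open MeasureTheory intervalIntegral

noncomputable def quantile (F : ℝ → ℝ) (y : ℝ) : ℝ := sInf {x | y ≤ F x}

section Quantile

variable {F G : ℝ → ℝ} {a b : ℝ}

lemma bddBelow_setOf_le_of_eq_zero (h0 : ∀ x, x < a → F x = 0) {y : ℝ} (hy : 0 < y) :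
    BddBelow {x | y ≤ F x} := by
  refine ⟨a, fun x hx => not_lt.mp fun hxa => ?_⟩
  rw [Set.mem_ofPred_eq, h0 x hxa] at hx
  linarith

lemma quantile_le (h0 : ∀ x, x < a → F x = 0) (h1 : ∀ x, b ≤ x → F x = 1) {y : ℝ}
    (hy0 : 0 < y) (hy1 : y ≤ 1) : quantile F y ≤ b :=
  csInf_le (bddBelow_setOf_le_of_eq_zero h0 hy0) (by simp [h1 b le_rfl, hy1])

lemma quantile_sub_le_quantile_of_le_add (hF0 : ∀ x, x < a → F x = 0)
    (hG1 : ∀ x, b ≤ x → G x = 1) {d y : ℝ} (hGF : ∀ x, G x ≤ F x + d)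
    (hy0 : 0 < y - d) (hy1 : y ≤ 1) : quantile F (y - d) ≤ quantile G y :=
  csInf_le_csInf (bddBelow_setOf_le_of_eq_zero hF0 hy0) ⟨b, by simp [hG1 b le_rfl, hy1]⟩
    fun x hx => by simp only [Set.mem_ofPred_eq] at hx ⊢; linarith [hGF x]

lemma monotoneOn_quantile (h0 : ∀ x, x < a → F x = 0) (h1 : ∀ x, b ≤ x → F x = 1) :
    MonotoneOn (quantile F) (Set.Ioc 0 1) := fun y₁ hy₁ y₂ hy₂ hy => by
  simpa using quantile_sub_le_quantile_of_le_add h0 h1 (d := y₂ - y₁)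
    (fun x => by linarith) (by linarith [hy₁.1]) hy₂.2

lemma quantile_intervalIntegrable (h0 : ∀ x, x < a → F x = 0) (h1 : ∀ x, b ≤ x → F x = 1)
    {u v : ℝ} (hu : 0 < u) (huv : u ≤ v) (hv : v ≤ 1) :
    IntervalIntegrable (quantile F) volume u v := by
  refine ((monotoneOn_quantile h0 h1).mono ?_).intervalIntegrable
  rw [Set.uIcc_of_le huv]
  exact Set.Icc_subset_Ioc_iff huv |>.mpr ⟨hu, hv⟩

lemma integral_quantile_le (h0 : ∀ x, x < a → F x = 0) (h1 : ∀ x, b ≤ x → F x = 1)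
    {u v : ℝ} (hu : 0 < u) (huv : u ≤ v) (hv : v ≤ 1) :
    ∫ y in u..v, quantile F y ≤ (v - u) * b := by
  simpa using integral_mono_on huv (quantile_intervalIntegrable h0 h1 hu huv hv)
    intervalIntegrable_const fun y hy => quantile_le h0 h1 (hu.trans_le hy.1) (hy.2.trans hv)

lemma mul_quantile_le_integral_quantile (h0 : ∀ x, x < a → F x = 0)
    (h1 : ∀ x, b ≤ x → F x = 1) {u v : ℝ} (hu : 0 < u) (huv : u ≤ v) (hv : v ≤ 1) :
    (v - u) * quantile F u ≤ ∫ y in u..v, quantile F y := by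
  simpa using integral_mono_on huv intervalIntegrable_const
    (quantile_intervalIntegrable h0 h1 hu huv hv) fun y hy =>
      monotoneOn_quantile h0 h1 ⟨hu, huv.trans hv⟩ ⟨hu.trans_le hy.1, hy.2.trans hv⟩ hy.1

lemma integral_quantile_le_integral_quantile_add (hF0 : ∀ x, x < a → F x = 0)
    (hF1 : ∀ x, b ≤ x → F x = 1) (hG0 : ∀ x, x < a → G x = 0) (hG1 : ∀ x, b ≤ x → G x = 1)
    {d u v : ℝ} (hFG : ∀ x, F x ≤ G x + d) (hd : 0 ≤ d) (hu : 0 < u) (huv : u ≤ v)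
    (hv : v + d ≤ 1) :
    ∫ y in u..v, quantile G y ≤ ∫ y in u + d..v + d, quantile F y := by
  rw [← integral_comp_add_right]
  refine integral_mono_on huv (quantile_intervalIntegrable hG0 hG1 hu huv (by linarith)) ?_
    fun y hy => by
      simpa using quantile_sub_le_quantile_of_le_add hG0 hF1 (y := y + d) hFG
        (by linarith [hy.1]) (by linarith [hy.2])
  simpa using (quantile_intervalIntegrable hF0 hF1 (u := u + d) (v := v + d) (by linarith)
    (by linarith) hv).comp_add_right d

lemma integral_quantile_sub_integral_quantile_le (hF0 : ∀ x, x < a → F x = 0)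
    (hF1 : ∀ x, b ≤ x → F x = 1) (hG0 : ∀ x, x < a → G x = 0) (hG1 : ∀ x, b ≤ x → G x = 1)
    {d u : ℝ} (hFG : ∀ x, F x ≤ G x + d) (hd : 0 ≤ d) (hu0 : 0 < u) (hu1 : u ≤ 1) :
    (∫ y in u..1, quantile G y) - ∫ y in u..1, quantile F y ≤ d * (b - quantile F u) := by
  have hFu : quantile F u ≤ b := quantile_le hF0 hF1 hu0 hu1
  rcases le_or_gt d (1 - u) with hdu | hdu
  · have hG_split := integral_add_adjacent_intervals
      (quantile_intervalIntegrable hG0 hG1 hu0 (v := 1 - d) (by linarith) (by linarith))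
      (quantile_intervalIntegrable hG0 hG1 (by linarith) (by linarith) le_rfl)
    have hF_split := integral_add_adjacent_intervals
      (quantile_intervalIntegrable hF0 hF1 hu0 (v := u + d) (by linarith) (by linarith))
      (quantile_intervalIntegrable hF0 hF1 (by linarith) (by linarith) le_rfl)
    have h_shift := integral_quantile_le_integral_quantile_add hF0 hF1 hG0 hG1 hFG hd hu0
      (v := 1 - d) (by linarith) (by linarith)
    have h_top := integral_quantile_le hG0 hG1 (u := 1 - d) (by linarith) (by linarith) le_rfl
    have h_bottom := mul_quantile_le_integral_quantile hF0 hF1 hu0 (v := u + d) (by linarith)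
      (by linarith)
    rw [sub_add_cancel] at h_shift
    linarith
  · have h_G := integral_quantile_le hG0 hG1 hu0 hu1 le_rfl
    have h_F := mul_quantile_le_integral_quantile hF0 hF1 hu0 hu1 le_rfl
    have h_window := mul_le_mul_of_nonneg_right hdu.le (sub_nonneg.mpr hFu)
    linarith

end Quantile

theorem stmt_15_general (a b α c : ℝ) (hα : α ∈ Set.Ioo (0:ℝ) 1)
    (hc : 0 < c) (hαc : α + c < 1)
    (F G : ℝ → ℝ)
    (hF0 : ∀ x, x < a → F x = 0) (hF1 : ∀ x, b ≤ x → F x = 1)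
    (hG0 : ∀ x, x < a → G x = 0) (hG1 : ∀ x, b ≤ x → G x = 1)
    (hdist : ∀ x, |F x - G x| ≤ c) :
    |(1 / α) * (∫ y in (1 - α)..1, quantile F y) -
        (1 / α) * ∫ y in (1 - α)..1, quantile G y| ≤
      ((b - quantile F (1 - α - c)) / α) * ⨆ x : ℝ, |F x - G x| := by
  obtain ⟨hα0, hα1⟩ := hα
  set D := ⨆ x : ℝ, |F x - G x|
  have hD : ∀ x, |F x - G x| ≤ D := le_ciSup ⟨c, Set.forall_mem_range.mpr hdist⟩
  have hD0 : 0 ≤ D := (abs_nonneg _).trans (hD 0)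
  have hGF := integral_quantile_sub_integral_quantile_le hF0 hF1 hG0 hG1
    (fun x => by linarith [abs_le.mp (hD x)]) hD0 (u := 1 - α) (by linarith) (by linarith)
  have hFG := integral_quantile_sub_integral_quantile_le hG0 hG1 hF0 hF1
    (fun x => by linarith [abs_le.mp (hD x)]) hD0 (u := 1 - α) (by linarith) (by linarith)
  have hqF : quantile F (1 - α - c) ≤ quantile F (1 - α) :=
    monotoneOn_quantile hF0 hF1 ⟨by linarith, by linarith⟩ ⟨by linarith, by linarith⟩
      (by linarith)
  have hqG : quantile F (1 - α - c) ≤ quantile G (1 - α) :=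
    quantile_sub_le_quantile_of_le_add hF0 hG1 (fun x => by linarith [abs_le.mp (hdist x)])
      (by linarith) (by linarith)
  have h_abs : |(∫ y in (1 - α)..1, quantile F y) - ∫ y in (1 - α)..1, quantile G y|
      ≤ D * (b - quantile F (1 - α - c)) :=
    abs_sub_le_iff.mpr ⟨by linarith [mul_le_mul_of_nonneg_left hqG hD0],
      by linarith [mul_le_mul_of_nonneg_left hqF hD0]⟩
  calc _ = 1 / α * |(∫ y in (1 - α)..1, quantile F y) - ∫ y in (1 - α)..1, quantile G y| := by
        rw [← mul_sub, abs_mul, abs_of_pos (one_div_pos.mpr hα0)]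
    _ ≤ 1 / α * (D * (b - quantile F (1 - α - c))) := by gcongr
    _ = _ := by ring

theorem stmt_15 (a b α c : ℝ) (hab : a < b) (hα : α ∈ Set.Ioo (0:ℝ) 1)
    (hc : 0 < c) (hαc : α + c < 1)
    (F G : ℝ → ℝ)
    (hFmono : Monotone F) (hF0 : ∀ x, x < a → F x = 0) (hF1 : ∀ x, b ≤ x → F x = 1)
    (hGmono : Monotone G) (hG0 : ∀ x, x < a → G x = 0) (hG1 : ∀ x, b ≤ x → G x = 1)
    (hdist : ∀ x, |F x - G x| ≤ c) :
    |(1 / α) * (∫ y in (1 - α)..1, quantile F y) -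
        (1 / α) * ∫ y in (1 - α)..1, quantile G y| ≤
      ((b - quantile F (1 - α - c)) / α) * ⨆ x : ℝ, |F x - G x| :=
  stmt_15_general a b α c hα hc hαc F G hF0 hF1 hG0 hG1 hdist
end

section
/- Let $F$ be a CDF on $[a,b]$, $\alpha \in (0,1)$, $c \in (0, 1-\alpha)$, and let $\bar F(x) = \max\{F(x)-c\cdot\mathbb{1}[x<b],0\}$ be the positive supremum-distance operator applied to $F$. Then $C_\alpha(\bar F) - C_\alpha(F) \le \frac{b - F^{-1}(1-\alpha)}{\alpha}\,c$, where $C_\alpha(F) = \frac{1}{\alpha}\int_{1-\alpha}^1 F^{-1}(y)\,dy$. -/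
theorem stmt_16 (a b α c : ℝ) (hab : a < b) (hα : α ∈ Set.Ioo (0:ℝ) 1)
    (hc : 0 < c) (hcα : c < 1 - α)
    (F : ℝ → ℝ)
    (hFmono : Monotone F) (hF0 : ∀ x, x < a → F x = 0) (hF1 : ∀ x, b ≤ x → F x = 1) :
    (1 / α) * (∫ y in (1 - α)..1,
        quantile (fun x => max (F x - c * (if x < b then 1 else 0)) 0) y) -
      (1 / α) * (∫ y in (1 - α)..1, quantile F y) ≤
        ((b - quantile F (1 - α)) / α) * c := by
  obtain ⟨hα0, hα1⟩ := hα
  set G : ℝ → ℝ := fun x => max (F x - c * (if x < b then 1 else 0)) 0 with hGdef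
  have hFb : F b = 1 := hF1 b le_rfl
  have hGb : G b = 1 := by simp [hGdef, hFb]
  have h1α : (0:ℝ) < 1 - α := by linarith
  -- nonemptiness and lower bounds
  have hne : ∀ y : ℝ, y ≤ 1 → {x | y ≤ F x}.Nonempty := by
    intro y hy; exact ⟨b, by simpa [hFb] using hy⟩
  have hneG : ∀ y : ℝ, y ≤ 1 → {x | y ≤ G x}.Nonempty := by
    intro y hy; exact ⟨b, by simpa [hGb] using hy⟩
  have hbdd : ∀ y : ℝ, 0 < y → a ∈ lowerBounds {x | y ≤ F x} := by
    intro y hy x hx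
    by_contra h
    push_neg at h
    have h0 := hF0 x h
    simp only [Set.mem_setOf_eq, h0] at hx
    linarith
  have hbddG : ∀ y : ℝ, 0 < y → a ∈ lowerBounds {x | y ≤ G x} := by
    intro y hy x hx
    by_contra h
    push_neg at h
    have h0 : F x = 0 := hF0 x h
    have hxb : x < b := lt_trans h hab
    have hG0 : G x = 0 := by
      simp only [hGdef, h0, if_pos hxb, mul_one]
      rw [max_eq_right]; linarith
    simp only [Set.mem_setOf_eq, hG0] at hx
    linarith
  have hqb : ∀ y : ℝ, 0 < y → y ≤ 1 → quantile F y ≤ b := by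
    intro y h0 h1
    exact csInf_le ⟨a, hbdd y h0⟩ (by simpa [hFb] using h1)
  have hQb : ∀ y : ℝ, 0 < y → y ≤ 1 → quantile G y ≤ b := by
    intro y h0 h1
    exact csInf_le ⟨a, hbddG y h0⟩ (by simpa [hGb] using h1)
  have hqmono : ∀ y z : ℝ, 0 < y → y ≤ z → z ≤ 1 → quantile F y ≤ quantile F z := by
    intro y z h0 hyz h1
    exact csInf_le_csInf ⟨a, hbdd y h0⟩ (hne z h1) (fun x hx => le_trans hyz hx)
  have hQmono : ∀ y z : ℝ, 0 < y → y ≤ z → z ≤ 1 → quantile G y ≤ quantile G z := by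
    intro y z h0 hyz h1
    exact csInf_le_csInf ⟨a, hbddG y h0⟩ (hneG z h1) (fun x hx => le_trans hyz hx)
  have hQq : ∀ y : ℝ, 0 < y → y + c ≤ 1 → quantile G y ≤ quantile F (y + c) := by
    intro y h0 h1
    apply csInf_le_csInf ⟨a, hbddG y h0⟩ (hne (y + c) h1)
    intro x hx
    simp only [Set.mem_setOf_eq] at hx ⊢
    have hle : c * (if x < b then 1 else 0) ≤ c := by
      split <;> nlinarith
    have : y ≤ F x - c * (if x < b then 1 else 0) := by linarith
    exact le_trans this (le_max_left _ _)
  -- integrability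
  have intq : ∀ u v : ℝ, 0 < u → u ≤ v → v ≤ 1 →
      IntervalIntegrable (quantile F) MeasureTheory.volume u v := by
    intro u v hu huv hv
    apply MonotoneOn.intervalIntegrable
    intro x hx y hy hxy
    rw [Set.uIcc_of_le huv] at hx hy
    exact hqmono x y (lt_of_lt_of_le hu hx.1) hxy (le_trans hy.2 hv)
  have intQ : ∀ u v : ℝ, 0 < u → u ≤ v → v ≤ 1 →
      IntervalIntegrable (quantile G) MeasureTheory.volume u v := by
    intro u v hu huv hv
    apply MonotoneOn.intervalIntegrable
    intro x hx y hy hxy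
    rw [Set.uIcc_of_le huv] at hx hy
    exact hQmono x y (lt_of_lt_of_le hu hx.1) hxy (le_trans hy.2 hv)
  have hq1αb : quantile F (1 - α) ≤ b := hqb (1 - α) h1α (by linarith)
  -- key inequality
  have key : (∫ y in (1 - α)..1, quantile G y) - (∫ y in (1 - α)..1, quantile F y) ≤
      (b - quantile F (1 - α)) * c := by
    rcases le_or_gt c α with hcase | hcase
    · -- c ≤ α : split at 1 - c and 1 - α + c
      have hac1 : (0:ℝ) < 1 - α := h1α
      have hI1 : IntervalIntegrable (quantile G) MeasureTheory.volume (1 - α) (1 - c) :=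
        intQ _ _ h1α (by linarith) (by linarith)
      have hI2 : IntervalIntegrable (quantile G) MeasureTheory.volume (1 - c) 1 :=
        intQ _ _ (by linarith) (by linarith) le_rfl
      have hI3 : IntervalIntegrable (quantile F) MeasureTheory.volume (1 - α) (1 - α + c) :=
        intq _ _ h1α (by linarith) (by linarith)
      have hI4 : IntervalIntegrable (quantile F) MeasureTheory.volume (1 - α + c) 1 :=
        intq _ _ (by linarith) (by linarith) le_rfl
      have splitQ : (∫ y in (1 - α)..(1 - c), quantile G y) +
          (∫ y in (1 - c)..1, quantile G y) = ∫ y in (1 - α)..1, quantile G y :=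
        intervalIntegral.integral_add_adjacent_intervals hI1 hI2
      have splitq : (∫ y in (1 - α)..(1 - α + c), quantile F y) +
          (∫ y in (1 - α + c)..1, quantile F y) = ∫ y in (1 - α)..1, quantile F y :=
        intervalIntegral.integral_add_adjacent_intervals hI3 hI4
      -- bound ∫_{1-c}^1 Q ≤ c * b
      have B1 : (∫ y in (1 - c)..1, quantile G y) ≤ c * b := by
        have hmono : (∫ y in (1 - c)..1, quantile G y) ≤ ∫ _ in (1 - c)..1, b := by
          apply intervalIntegral.integral_mono_on (by linarith) hI2 intervalIntegrable_const
          intro y hy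
          exact hQb y (by linarith [hy.1]) hy.2
        rw [intervalIntegral.integral_const, smul_eq_mul] at hmono
        calc (∫ y in (1 - c)..1, quantile G y) ≤ (1 - (1 - c)) * b := hmono
        _ = c * b := by ring
      -- bound ∫_{1-α}^{1-c} Q ≤ ∫_{1-α+c}^1 q
      have B2 : (∫ y in (1 - α)..(1 - c), quantile G y) ≤
          ∫ y in (1 - α + c)..1, quantile F y := by
        have hcomp : IntervalIntegrable (fun y => quantile F (y + c))
            MeasureTheory.volume (1 - α) (1 - c) := by
          have := hI4.comp_add_right c
          have h1 : 1 - α + c - c = 1 - α := by ring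
          have h2 : (1:ℝ) - c = 1 - c := rfl
          rw [h1] at this
          exact this
        have hmono : (∫ y in (1 - α)..(1 - c), quantile G y) ≤
            ∫ y in (1 - α)..(1 - c), quantile F (y + c) := by
          apply intervalIntegral.integral_mono_on (by linarith) hI1 hcomp
          intro y hy
          exact hQq y (by linarith [hy.1]) (by linarith [hy.2])
        have hshift : (∫ y in (1 - α)..(1 - c), quantile F (y + c)) =
            ∫ y in (1 - α + c)..1, quantile F y := by
          rw [intervalIntegral.integral_comp_add_right]
          congr 1 <;> ring
        linarith [hmono, hshift.le, hshift.ge]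
      -- bound ∫_{1-α}^{1-α+c} q ≥ c * q(1-α)
      have B3 : c * quantile F (1 - α) ≤ ∫ y in (1 - α)..(1 - α + c), quantile F y := by
        have hmono : (∫ _ in (1 - α)..(1 - α + c), quantile F (1 - α)) ≤
            ∫ y in (1 - α)..(1 - α + c), quantile F y := by
          apply intervalIntegral.integral_mono_on (by linarith) intervalIntegrable_const hI3
          intro y hy
          exact hqmono (1 - α) y h1α hy.1 (by linarith [hy.2])
        rw [intervalIntegral.integral_const, smul_eq_mul] at hmono
        calc c * quantile F (1 - α) = (1 - α + c - (1 - α)) * quantile F (1 - α) := by ring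
        _ ≤ _ := hmono
      nlinarith [splitQ, splitq, B1, B2, B3]
    · -- α < c : crude bound
      have BQ : (∫ y in (1 - α)..1, quantile G y) ≤ α * b := by
        have hI : IntervalIntegrable (quantile G) MeasureTheory.volume (1 - α) 1 :=
          intQ _ _ h1α (by linarith) le_rfl
        have hmono : (∫ y in (1 - α)..1, quantile G y) ≤ ∫ _ in (1 - α)..1, b := by
          apply intervalIntegral.integral_mono_on (by linarith) hI intervalIntegrable_const
          intro y hy
          exact hQb y (by linarith [hy.1]) hy.2
        rw [intervalIntegral.integral_const, smul_eq_mul] at hmono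
        calc (∫ y in (1 - α)..1, quantile G y) ≤ (1 - (1 - α)) * b := hmono
        _ = α * b := by ring
      have Bq : α * quantile F (1 - α) ≤ ∫ y in (1 - α)..1, quantile F y := by
        have hI : IntervalIntegrable (quantile F) MeasureTheory.volume (1 - α) 1 :=
          intq _ _ h1α (by linarith) le_rfl
        have hmono : (∫ _ in (1 - α)..1, quantile F (1 - α)) ≤
            ∫ y in (1 - α)..1, quantile F y := by
          apply intervalIntegral.integral_mono_on (by linarith) intervalIntegrable_const hI
          intro y hy
          exact hqmono (1 - α) y h1α hy.1 hy.2
        rw [intervalIntegral.integral_const, smul_eq_mul] at hmono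
        calc α * quantile F (1 - α) = (1 - (1 - α)) * quantile F (1 - α) := by ring
        _ ≤ _ := hmono
      nlinarith [BQ, Bq, hq1αb]
  have hαpos : (0:ℝ) < 1 / α := by positivity
  calc (1 / α) * (∫ y in (1 - α)..1, quantile G y) -
      (1 / α) * (∫ y in (1 - α)..1, quantile F y)
      = (1 / α) * ((∫ y in (1 - α)..1, quantile G y) -
        (∫ y in (1 - α)..1, quantile F y)) := by ring
    _ ≤ (1 / α) * ((b - quantile F (1 - α)) * c) :=
        mul_le_mul_of_nonneg_left key hαpos.le
    _ = ((b - quantile F (1 - α)) / α) * c := by ring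
end
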